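/- The map Φ := (q*)⁻¹ ∘ (ι*|_{𝓥†_{λ⃗,k}}) : 𝓥†_{λ⃗,k} → H⁰(𝓜_{λ⃗,k},𝓛_{λ⃗,k}) is a well-defined isomorphism instantiating Pauly's isomorphism for the Bott–Borel–Weil model of the space of conformal blocks; it is natural in the complex structure and hence defines an isomorphism of vector bundles over 𝕄_n between the sheaf of conformal blocks 𝓥†_{λ⃗,k} and the Verlinde bundle H_{λ⃗,k} with fibres H⁰(𝓜_{λ⃗,k},𝓛_{λ⃗,k}). -/
import Mathlib


/-!
STATEMENT 12: The map `Φ := (q*)⁻¹ ∘ (ι*|_{𝓥†_{λ⃗,k}}) : 𝓥†_{λ⃗,k} →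
H⁰(𝓜_{λ⃗,k},𝓛_{λ⃗,k})` is a well-defined isomorphism instantiating Pauly's
isomorphism for the Bott–Borel–Weil model of the space of conformal blocks; it
is natural in the complex structure and hence defines an isomorphism of vector
bundles over `𝕄_n` between the sheaf of conformal blocks `𝓥†_{λ⃗,k}` and the
Verlinde bundle `H_{λ⃗,k}` with fibres `H⁰(𝓜_{λ⃗,k},𝓛_{λ⃗,k})`.

Abstract model: all data are families over the points `σ` of `𝕄_n` (the
complex structures); an isomorphism of vector bundles is a family of
fibrewise linear isomorphisms. -/

/-- Families, over `𝕄_n`, of the section spaces and restriction maps over the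
common Zariski-open subset `U_{λ⃗,k}`. -/
structure PaulySetup where
  /-- the weight lattice of `𝔤` -/
  W : Type
  [wAdd : AddCommGroup W]
  /-- the `k`-admissible dominant integral weights `Λ_k` -/
  admissible : ℕ → Set W
  /-- the level -/
  k : ℕ
  k_pos : 0 < k
  /-- the number of marked points -/
  n : ℕ
  /-- the tuple of weights `λ⃗` -/
  lam : Fin n → W
  /-- the moduli space `𝕄_n` of genus zero curves with `n` ordered marked points -/
  Mn : Type
  /-- the fibres `H⁰(𝓜_{λ⃗,k,σ}, 𝓛_{λ⃗,k,σ})` of the Verlinde bundle `H_{λ⃗,k}` -/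
  SecM : Mn → Type
  [mAdd : ∀ σ, AddCommGroup (SecM σ)]
  [mMod : ∀ σ, Module ℂ (SecM σ)]
  /-- the fibres `H⁰(𝔽_λ⃗, 𝓛_λ⃗)` -/
  SecF : Mn → Type
  [fAdd : ∀ σ, AddCommGroup (SecF σ)]
  [fMod : ∀ σ, Module ℂ (SecF σ)]
  /-- the fibres `H⁰(U_{λ⃗,k}, 𝙻_λ⃗)` -/
  SecU : Mn → Type
  [uAdd : ∀ σ, AddCommGroup (SecU σ)]
  [uMod : ∀ σ, Module ℂ (SecU σ)]
  /-- the injections `q*` -/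
  qPull : ∀ σ, SecM σ →ₗ[ℂ] SecU σ
  qPull_inj : ∀ σ, Function.Injective (qPull σ)
  /-- the injections `ι*` -/
  iPull : ∀ σ, SecF σ →ₗ[ℂ] SecU σ
  iPull_inj : ∀ σ, Function.Injective (iPull σ)
  /-- the fibres of the sheaf of conformal blocks, `𝓥†_{λ⃗,k} ⊆ H⁰(𝔽_λ⃗,𝓛_λ⃗)` -/
  Covacua : ∀ σ, Submodule ℂ (SecF σ)
  /-- the preceding lemma: `im q* = ι*[𝓥†_{λ⃗,k}]` in each fibre -/
  range_eq : ∀ σ, LinearMap.range (qPull σ) = (Covacua σ).map (iPull σ)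

attribute [instance] PaulySetup.wAdd PaulySetup.mAdd PaulySetup.mMod
  PaulySetup.fAdd PaulySetup.fMod PaulySetup.uAdd PaulySetup.uMod

/-- Pauly's isomorphism: a fibrewise well-defined linear isomorphism
`Φ = (q*)⁻¹ ∘ ι*|_{𝓥†}` from the sheaf of conformal blocks to the Verlinde
bundle, i.e. an isomorphism of vector bundles over `𝕄_n`. -/
theorem pauly_isomorphism (S : PaulySetup)
    (hadm : ∀ i, S.lam i ∈ S.admissible S.k) :
    ∃ Φ : ∀ σ : S.Mn, (S.Covacua σ) ≃ₗ[ℂ] S.SecM σ,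
      ∀ (σ : S.Mn) (v : S.Covacua σ),
        S.qPull σ (Φ σ v) = S.iPull σ (v : S.SecF σ) := by
  refine ⟨fun σ =>
    ((Submodule.equivMapOfInjective (S.iPull σ) (S.iPull_inj σ) (S.Covacua σ)).trans
      ((LinearEquiv.ofEq _ _ (S.range_eq σ).symm).trans
        (LinearEquiv.ofInjective (S.qPull σ) (S.qPull_inj σ)).symm)), fun σ v => ?_⟩
  have h := (LinearEquiv.ofInjective (S.qPull σ) (S.qPull_inj σ)).apply_symm_apply
    ((LinearEquiv.ofEq _ _ (S.range_eq σ).symm)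
      ((Submodule.equivMapOfInjective (S.iPull σ) (S.iPull_inj σ) (S.Covacua σ)) v))
  have h2 := congrArg (Subtype.val) h
  exact h2
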